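/- Let T : [0,∞) → [1,∞) be an increasing surjective function extending tetration of 2 (i.e., T(n) = ⁿ2 for every natural number n), and let slog : [1,∞) → [0,∞) be its inverse. The map t ↦ t + slog(t) is an increasing bijection from [1,∞) onto [1,∞); let 𝔰 : [1,∞) → [1,∞) denote its inverse. Then for every natural number n ≥ 1, log*(ⁿ2) − log⊛(ⁿ2) = (𝔰(n) − ⌊𝔰(n)⌋) + slog(𝔰(n)). -/
import Mathlib

noncomputable def lg (x : ℝ) : ℝ := Real.logb 2 (max 1 x)

noncomputable def logStar (α : ℝ) : ℕ := sInf {k : ℕ | lg^[k] α ≤ 1}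

noncomputable def logCirc (α : ℝ) : ℕ := sSup {k : ℕ | (k : ℝ) ≤ lg^[k] α}

/-- Tetration of 2: `⁰2 = 1`, `ⁿ⁺¹2 = 2^(ⁿ2)`. -/
def tet : ℕ → ℕ
  | 0 => 1
  | n + 1 => 2 ^ tet n

lemma tet_ge_one (j : ℕ) : 1 ≤ tet j := by
  induction j with
  | zero => simp [tet]
  | succ m ih => simpa [tet] using Nat.one_le_two_pow

lemma tet_ge_two (j : ℕ) (hj : 1 ≤ j) : 2 ≤ tet j := by
  obtain ⟨m, rfl⟩ := Nat.exists_eq_add_of_le' hj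
  show 2 ≤ 2 ^ tet m
  calc 2 = 2 ^ 1 := (pow_one 2).symm
  _ ≤ 2 ^ tet m := Nat.pow_le_pow_right (by norm_num) (tet_ge_one m)

lemma lg_tet_succ (j : ℕ) : lg ((tet (j+1) : ℕ) : ℝ) = (tet j : ℝ) := by
  have h : ((tet (j+1) : ℕ) : ℝ) = (2:ℝ) ^ (tet j) := by
    show ((2 ^ tet j : ℕ) : ℝ) = _
    push_cast; ring
  have h1 : (1:ℝ) ≤ (2:ℝ) ^ (tet j) := one_le_pow₀ (by norm_num)
  rw [lg, h, max_eq_right h1, Real.logb_pow, Real.logb_self_eq_one (by norm_num)]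
  ring

lemma lg_iter_tet (k j : ℕ) : lg^[k] ((tet (j+k) : ℕ) : ℝ) = (tet j : ℝ) := by
  induction k generalizing j with
  | zero => simp
  | succ m ih =>
    rw [Function.iterate_succ_apply, show j+(m+1) = (j+m)+1 from by ring,
      lg_tet_succ (j+m)]
    exact ih j

lemma lg_one : lg 1 = 0 := by simp [lg]

lemma lg_zero : lg 0 = 0 := by simp [lg]

lemma lg_iter_tet_big (n k : ℕ) (hk : n < k) : lg^[k] ((tet n : ℕ) : ℝ) = 0 := by
  obtain ⟨j, rfl⟩ := Nat.exists_eq_add_of_le hk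
  rw [show n + 1 + j = j + (1 + n) from by ring, Function.iterate_add_apply,
    Function.iterate_add_apply]
  have h0 : lg^[n] ((tet n : ℕ) : ℝ) = (tet 0 : ℝ) := by
    simpa using lg_iter_tet n 0
  rw [h0]
  have : lg^[1] ((tet 0 : ℕ) : ℝ) = 0 := by
    show lg ((1:ℕ) : ℝ) = 0
    rw [Nat.cast_one, lg_one]
  rw [this, Function.iterate_fixed lg_zero]

lemma logStar_tet (n : ℕ) (hn : 1 ≤ n) : logStar ((tet n : ℕ) : ℝ) = n := by
  have hmem : n ∈ {k : ℕ | lg^[k] ((tet n : ℕ) : ℝ) ≤ 1} := by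
    have h := lg_iter_tet n 0
    rw [zero_add] at h
    simp only [Set.mem_setOf_eq, h]
    norm_num [tet]
  refine le_antisymm (Nat.sInf_le hmem) (le_csInf ⟨n, hmem⟩ ?_)
  intro k hk
  by_contra hlt
  push_neg at hlt
  have h := lg_iter_tet k (n - k)
  rw [Nat.sub_add_cancel hlt.le] at h
  simp only [Set.mem_setOf_eq, h] at hk
  have h2 : 2 ≤ tet (n - k) := tet_ge_two _ (by omega)
  have : (2:ℝ) ≤ (tet (n-k) : ℝ) := by exact_mod_cast h2
  linarith

theorem stmt2 (T slog s : ℝ → ℝ)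
    (hT_mono : StrictMonoOn T (Set.Ici (0 : ℝ)))
    (hT_mem : ∀ x ∈ Set.Ici (0 : ℝ), T x ∈ Set.Ici (1 : ℝ))
    (hT_surj : ∀ y ∈ Set.Ici (1 : ℝ), ∃ x ∈ Set.Ici (0 : ℝ), T x = y)
    (hT_tet : ∀ n : ℕ, T n = tet n)
    (hslog_left : ∀ x ∈ Set.Ici (0 : ℝ), slog (T x) = x)
    (hslog_right : ∀ y ∈ Set.Ici (1 : ℝ), T (slog y) = y)
    (hs_mem : ∀ y ∈ Set.Ici (1 : ℝ), s y ∈ Set.Ici (1 : ℝ))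
    (hs_left : ∀ t ∈ Set.Ici (1 : ℝ), s (t + slog t) = t)
    (hs_right : ∀ y ∈ Set.Ici (1 : ℝ), s y + slog (s y) = y)
    (n : ℕ) (hn : 1 ≤ n) :
    (logStar (tet n) : ℝ) - (logCirc (tet n) : ℝ)
      = (s n - (⌊s n⌋ : ℝ)) + slog (s n) := by
  -- the minimal j with n ≤ j + tet j
  have hex : ∃ j, n ≤ j + tet j := ⟨n, Nat.le_add_right n _⟩
  set j0 := Nat.find hex with hj0def
  have hj0 : n ≤ j0 + tet j0 := Nat.find_spec hex
  have hj0min : ∀ j < j0, ¬ (n ≤ j + tet j) := fun j hj => Nat.find_min hex hj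
  have hj0n : j0 ≤ n := Nat.find_le (Nat.le_add_right n _)
  set k0 := n - j0 with hk0def
  have hk0j0 : k0 + j0 = n := Nat.sub_add_cancel hj0n
  have hk0tet : k0 ≤ tet j0 := by omega
  have hk0ge1 : 1 ≤ k0 := by
    rcases Nat.eq_zero_or_pos j0 with h | h
    · omega
    · have h1 := hj0min (j0 - 1) (by omega)
      have h2 := tet_ge_one (j0 - 1)
      omega
  -- logCirc value
  have hcirc : logCirc ((tet n : ℕ) : ℝ) = k0 := by
    have hmemk0 : k0 ∈ {k : ℕ | (k:ℝ) ≤ lg^[k] ((tet n : ℕ) : ℝ)} := by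
      have h := lg_iter_tet k0 j0
      rw [show j0 + k0 = n from by omega] at h
      simp only [Set.mem_setOf_eq, h]
      exact_mod_cast hk0tet
    have hbdd : BddAbove {k : ℕ | (k:ℝ) ≤ lg^[k] ((tet n : ℕ) : ℝ)} := by
      refine ⟨n, fun k hk => ?_⟩
      by_contra hgt
      push_neg at hgt
      simp only [Set.mem_setOf_eq, lg_iter_tet_big n k hgt] at hk
      have : (0:ℝ) < (k:ℝ) := by exact_mod_cast Nat.lt_of_le_of_lt (Nat.zero_le n) hgt
      linarith
    refine le_antisymm (csSup_le ⟨k0, hmemk0⟩ ?_) (le_csSup hbdd hmemk0)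
    intro k hk
    by_contra hlt
    push_neg at hlt
    have hkn : k ≤ n := by
      by_contra hgt
      push_neg at hgt
      simp only [Set.mem_setOf_eq, lg_iter_tet_big n k hgt] at hk
      have : (0:ℝ) < (k:ℝ) := by exact_mod_cast Nat.lt_of_le_of_lt (Nat.zero_le n) hgt
      linarith
    have h := lg_iter_tet k (n - k)
    rw [Nat.sub_add_cancel hkn] at h
    simp only [Set.mem_setOf_eq, h] at hk
    have hk' : k ≤ tet (n - k) := by exact_mod_cast hk
    have := hj0min (n - k) (by omega)
    omega
  -- slog basics
  have hT0 : T 0 = 1 := by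
    have h := hT_tet 0
    norm_num [tet] at h
    exact h
  have hslog_nonneg : ∀ y ∈ Set.Ici (1:ℝ), 0 ≤ slog y := by
    intro y hy
    obtain ⟨x, hx, rfl⟩ := hT_surj y hy
    rw [hslog_left x hx]
    exact hx
  have hslog_mono : ∀ a b : ℝ, 1 ≤ a → a ≤ b → slog a ≤ slog b := by
    intro a b ha hab
    by_contra h
    push_neg at h
    have hb : (1:ℝ) ≤ b := ha.trans hab
    have := hT_mono (hslog_nonneg b hb) (hslog_nonneg a ha) h
    rw [hslog_right a ha, hslog_right b hb] at this
    linarith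
  have hTj0 : slog ((tet j0 : ℕ) : ℝ) = (j0 : ℝ) := by
    rw [← hT_tet j0]
    exact hslog_left _ (Set.mem_Ici.mpr (by positivity))
  have hn1 : (1:ℝ) ≤ (n:ℝ) := by exact_mod_cast hn
  have hsn : (1:ℝ) ≤ s n := hs_mem n hn1
  have hsr : s n + slog (s n) = n := hs_right n hn1
  have hslogsn : 0 ≤ slog (s n) := hslog_nonneg _ hsn
  have hk01 : (1:ℝ) ≤ (k0:ℝ) := by exact_mod_cast hk0ge1
  -- lower bound: k0 ≤ s n
  have hfloor1 : (k0:ℝ) ≤ s n := by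
    by_contra h
    push_neg at h
    have hm := hslog_mono (s n) (k0:ℝ) hsn h.le
    have h2 : slog (k0:ℝ) ≤ (j0:ℝ) := by
      rw [← hTj0]
      exact hslog_mono _ _ hk01 (by exact_mod_cast hk0tet)
    have hc : (k0:ℝ) + (j0:ℝ) = (n:ℝ) := by exact_mod_cast hk0j0
    linarith
  -- upper bound: s n < k0 + 1
  have hfloor2 : s n < (k0:ℝ) + 1 := by
    by_contra h
    push_neg at h
    have hm := hslog_mono ((k0:ℝ)+1) (s n) (by linarith) h
    rcases Nat.eq_zero_or_pos j0 with hz | hp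
    · have hk0n : k0 = n := by omega
      have hnng : 0 ≤ slog ((k0:ℝ)+1) := hslog_nonneg _ (Set.mem_Ici.mpr (by linarith))
      have hcc : (k0:ℝ) = (n:ℝ) := by exact_mod_cast hk0n
      linarith
    · have hmin := hj0min (j0 - 1) (by omega)
      push_neg at hmin
      have hkj : tet (j0 - 1) < k0 + 1 := by omega
      have hkjR : ((tet (j0-1) : ℕ) : ℝ) < (k0:ℝ) + 1 := by exact_mod_cast hkj
      have hst : ((j0:ℝ) - 1) < slog ((k0:ℝ)+1) := by
        by_contra h2
        push_neg at h2
        have hj1 : ((j0 - 1 : ℕ) : ℝ) = (j0:ℝ) - 1 := by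
          have : (1:ℕ) ≤ j0 := hp
          push_cast [Nat.cast_sub this]
          ring
        have hle : slog ((k0:ℝ)+1) ≤ ((j0 - 1 : ℕ) : ℝ) := by rw [hj1]; exact h2
        have hmono := hT_mono.monotoneOn
        have hTle : T (slog ((k0:ℝ)+1)) ≤ T ((j0 - 1 : ℕ) : ℝ) :=
          hmono (Set.mem_Ici.mpr (hslog_nonneg _ (Set.mem_Ici.mpr (by linarith))))
            (Set.mem_Ici.mpr (by positivity)) hle
        rw [hslog_right _ (Set.mem_Ici.mpr (by linarith)), hT_tet] at hTle
        linarith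
      have hc : (k0:ℝ) + (j0:ℝ) = (n:ℝ) := by exact_mod_cast hk0j0
      linarith
  have hfl : (⌊s n⌋ : ℝ) = (k0 : ℝ) := by
    have h : ⌊s n⌋ = (k0 : ℤ) := by
      rw [Int.floor_eq_iff]
      constructor
      · exact_mod_cast hfloor1
      · push_cast
        exact hfloor2
    rw [h]
    push_cast
    ring
  rw [logStar_tet n hn, hcirc, hfl]
  linarith
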